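/- arXiv:2206.05407 — 2 statements merged into one kernel-verified Lean document; each statement's English description precedes it below -/
import Mathlib

section
/- Let λ > 0, Q < 0 with λ + Q > 0, M > 0, and suppose bλe^{QM} = bλ + Q with a + b = 1. If g₂(x) = k e^{Qx} with k = -Q/(M(bλ+Q)), then for all x ≥ M: k e^{Qx} = λe^{-λx}∫₀^M e^{λμ} g₁(μ) dμ - kλe^{QM - λx}(a e^{λM} + b)/(λ+Q) + λ(a + b e^{QM}) k e^{Qx}/(λ+Q), where g₁(μ) = (1 - e^{Qμ})/M. -/
/-!
The tail equation holds for every `x` as soon as two matching conditions hold. The fixed-point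
relation `bλe^{QM} = bλ + Q` with `a + b = 1` gives `λ(a + b e^{QM}) = λ + Q`, so the last term
reproduces `k e^{Qx}`. Computing `∫₀^M e^{λμ} g₁(μ) dμ` explicitly, the same relation shows it equals
`k e^{QM}(a e^{λM} + b)/(λ+Q)` for `k = -Q/(M(bλ+Q))`, so the first two terms cancel.
-/

open Real intervalIntegral

theorem integral_exp_mul_real {c : ℝ} (hc : c ≠ 0) (a b : ℝ) :
    ∫ x in a..b, exp (c * x) = (exp (c * b) - exp (c * a)) / c := by
  rw [integral_comp_mul_left (fun x => exp x) hc, integral_exp, smul_eq_mul, inv_mul_eq_div]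

theorem integral_exp_mul_one_sub_exp {lam Q : ℝ} (hlam : lam ≠ 0) (hlQ : lam + Q ≠ 0) (M : ℝ) :
    ∫ μ in (0 : ℝ)..M, exp (lam * μ) * (1 - exp (Q * μ))
      = (exp (lam * M) - 1) / lam - (exp ((lam + Q) * M) - 1) / (lam + Q) := by
  have hsplit : ∀ μ : ℝ, exp (lam * μ) * (1 - exp (Q * μ)) = exp (lam * μ) - exp ((lam + Q) * μ) :=
    fun μ => by rw [add_mul, exp_add]; ring
  simp_rw [hsplit]
  rw [integral_sub (Continuous.intervalIntegrable (by fun_prop) _ _)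
    (Continuous.intervalIntegrable (by fun_prop) _ _), integral_exp_mul_real hlam,
    integral_exp_mul_real hlQ]
  simp

-- `G` and `H` stand for `e^{QM}` and `e^{λM}`.
theorem mass_matching {lam Q a b G H : ℝ} (hlam : lam ≠ 0) (hlQ : lam + Q ≠ 0)
    (hbQ : b * lam + Q ≠ 0) (hfix : b * lam * G = b * lam + Q) (hab : a + b = 1) :
    -Q / (b * lam + Q) * G * (a * H + b) / (lam + Q) = (H - 1) / lam - (H * G - 1) / (lam + Q) := by
  field_simp
  linear_combination (H * lam + H * Q - Q) * hfix - H * G * lam * Q * hab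

theorem exp_ansatz_tail_eq_of_matching {lam Q M a b k I : ℝ}
    (hrate : lam * (a + b * exp (Q * M)) / (lam + Q) = 1)
    (hmass : k * exp (Q * M) * (a * exp (lam * M) + b) / (lam + Q) = I) (x : ℝ) :
    k * exp (Q * x) =
      lam * exp (-lam * x) * I
        - k * lam * exp (Q * M - lam * x) * (a * exp (lam * M) + b) / (lam + Q)
        + lam * (a + b * exp (Q * M)) * k * exp (Q * x) / (lam + Q) := by
  rw [sub_eq_add_neg (Q * M), exp_add, ← neg_mul]
  linear_combination (-(k * exp (Q * x))) * hrate + lam * exp (-lam * x) * hmass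

theorem stmt_6_general (lam Q M a b k : ℝ) (hlam : 0 < lam) (hQ : Q < 0)
    (hlQ : 0 < lam + Q)
    (hfix : b * lam * Real.exp (Q * M) = b * lam + Q)
    (hab : a + b = 1)
    (hk : k = -Q / (M * (b * lam + Q)))
    (g₁ : ℝ → ℝ) (hg₁ : ∀ μ, g₁ μ = (1 - Real.exp (Q * μ)) / M) :
    ∀ x, M ≤ x →
      k * Real.exp (Q * x) =
        lam * Real.exp (-lam * x) * (∫ μ in (0 : ℝ)..M, Real.exp (lam * μ) * g₁ μ)
          - k * lam * Real.exp (Q * M - lam * x) * (a * Real.exp (lam * M) + b) / (lam + Q)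
          + lam * (a + b * Real.exp (Q * M)) * k * Real.exp (Q * x) / (lam + Q) := by
  intro x _
  have hbQ : b * lam + Q ≠ 0 := by
    intro h
    have hb : b = 0 := by simpa [h, hlam.ne', exp_ne_zero] using hfix
    exact hQ.ne (by simpa [hb] using h)
  refine exp_ansatz_tail_eq_of_matching ?_ ?_ x
  · field_simp
    linear_combination hfix + lam * hab
  · simp_rw [hg₁, ← mul_div_assoc, intervalIntegral.integral_div,
      integral_exp_mul_one_sub_exp hlam.ne' hlQ.ne', add_mul, exp_add,
      ← mass_matching hlam.ne' hlQ.ne' hbQ hfix hab, hk, mul_comm M, ← div_div]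
    ring

/-- the exponential ansatz `g₂(x) = k e^{Qx}` with
`k = -Q/(M(bλ+Q))` satisfies the fixed-point integral identity for the
tail `x ≥ M` of the stationary energy density. -/
theorem stmt_6 (lam Q M a b k : ℝ) (hlam : 0 < lam) (hQ : Q < 0)
    (hlQ : 0 < lam + Q) (hM : 0 < M)
    (hfix : b * lam * Real.exp (Q * M) = b * lam + Q)
    (hab : a + b = 1)
    (hk : k = -Q / (M * (b * lam + Q)))
    (g₁ : ℝ → ℝ) (hg₁ : ∀ μ, g₁ μ = (1 - Real.exp (Q * μ)) / M) :
    ∀ x, M ≤ x →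
      k * Real.exp (Q * x) =
        lam * Real.exp (-lam * x) * (∫ μ in (0 : ℝ)..M, Real.exp (lam * μ) * g₁ μ)
          - k * lam * Real.exp (Q * M - lam * x) * (a * Real.exp (lam * M) + b) / (lam + Q)
          + lam * (a + b * Real.exp (Q * M)) * k * Real.exp (Q * x) / (lam + Q) :=
  stmt_6_general lam Q M a b k hlam hQ hlQ hfix hab hk g₁ hg₁
end

section
/- Let a, b > 0 with a + b = 1, λ, M > 0, and Q < 0 with λ + Q > 0 satisfying bλe^{QM} = bλ + Q. Then (1 - e^{(λ+Q)M})/((λ+Q)M) - (1 - e^{λM})/(λM) = (1 - e^{QM})(b + a e^{λM})/((λ+Q)M). -/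
open Real

/- After clearing denominators the left side is `u x (1 - y) - v (1 - x)`; replacing `v` by
`b u (y - 1)` turns it into `u (1 - y) (b + (1 - b) x)`. -/
theorem sub_div_sub_eq_of_mul_eq_add {K : Type*} [Field K] {a b u v x y : K}
    (hu : u ≠ 0) (huv : u + v ≠ 0) (hab : a + b = 1) (hv : b * u * y = b * u + v) :
    (1 - x * y) / (u + v) - (1 - x) / u = (1 - y) * (b + a * x) / (u + v) := by
  field_simp
  linear_combination (1 - x) * hv - u * x * (1 - y) * hab

theorem stmt_8_general (a b lam M Q : ℝ) (hab : a + b = 1)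
    (hlam : 0 < lam) (hM : 0 < M) (hlQ : 0 < lam + Q)
    (hfix : b * lam * Real.exp (Q * M) = b * lam + Q) :
    (1 - Real.exp ((lam + Q) * M)) / ((lam + Q) * M)
        - (1 - Real.exp (lam * M)) / (lam * M) =
      (1 - Real.exp (Q * M)) * (b + a * Real.exp (lam * M)) / ((lam + Q) * M) := by
  have hfixM : b * (lam * M) * Real.exp (Q * M) = b * (lam * M) + Q * M := by
    linear_combination M * hfix
  rw [add_mul, Real.exp_add]
  exact sub_div_sub_eq_of_mul_eq_add (by positivity) (by rw [← add_mul]; positivity) hab hfixM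

/-- algebraic identity verifying condition (B13b) of the
stationary-distribution proof. -/
theorem stmt_8 (a b lam M Q : ℝ) (ha : 0 < a) (hb : 0 < b) (hab : a + b = 1)
    (hlam : 0 < lam) (hM : 0 < M) (hQ : Q < 0) (hlQ : 0 < lam + Q)
    (hfix : b * lam * Real.exp (Q * M) = b * lam + Q) :
    (1 - Real.exp ((lam + Q) * M)) / ((lam + Q) * M)
        - (1 - Real.exp (lam * M)) / (lam * M) =
      (1 - Real.exp (Q * M)) * (b + a * Real.exp (lam * M)) / ((lam + Q) * M) :=
  stmt_8_general a b lam M Q hab hlam hM hlQ hfix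
end
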